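/- Let L₁ and L₂ be regular languages over Σ. If the language MGP(L₁,L₂) of minimal gamma-alpha-prefixes is infinite and, in addition, L₁ is finite or L₂ is finite, then the hairpin completion H_κ(L₁,L₂) is not regular. -/

import Mathlib

/-- The antimorphic extension of an involution on letters to words. -/
def ovr {σ : Type} (bar : σ → σ) (w : List σ) : List σ := (w.map bar).reverse

/-- The hairpin completion `H_κ(L₁, L₂)`. -/
def hairpinCompletion {σ : Type} (bar : σ → σ) (κ : ℕ) (L1 L2 : Language σ) :
    Language σ :=
  { π | ∃ γ α β : List σ,
      π = γ ++ α ++ β ++ ovr bar α ++ ovr bar γ ∧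
      κ ≤ α.length ∧
      (γ ++ α ++ β ++ ovr bar α ∈ L1 ∨ α ++ β ++ ovr bar α ++ ovr bar γ ∈ L2) }

/-- The canonical factorization `(γ, α, β)` of a word `π` of the hairpin completion. -/
def CanonFact {σ : Type} (bar : σ → σ) (κ : ℕ) (L1 L2 : Language σ)
    (π γ α β : List σ) : Prop :=
  π = γ ++ α ++ β ++ ovr bar α ++ ovr bar γ ∧
  α.length = κ ∧
  (γ ++ α ++ β ++ ovr bar α ∈ L1 ∨ α ++ β ++ ovr bar α ++ ovr bar γ ∈ L2) ∧
  (∀ u : List σ, u <+: π → u ∈ L1 → u <+: γ ++ α ++ β ++ ovr bar α) ∧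
  (∀ u : List σ, u <:+ π → u ∈ L2 → u <:+ α ++ β ++ ovr bar α ++ ovr bar γ)

/-- The language of minimal gamma-alpha-prefixes of words of the hairpin completion. -/
def MGP {σ : Type} (bar : σ → σ) (κ : ℕ) (L1 L2 : Language σ) : Language σ :=
  { p | ∃ π γ α β : List σ, π ∈ hairpinCompletion bar κ L1 L2 ∧
      CanonFact bar κ L1 L2 π γ α β ∧ p = γ ++ α }

/-- The language of middle factors of canonical factorizations of words
of the hairpin completion. -/
def Mid {σ : Type} (bar : σ → σ) (κ : ℕ) (L1 L2 : Language σ) : Language σ :=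
  { β | ∃ π γ α : List σ, π ∈ hairpinCompletion bar κ L1 L2 ∧
      CanonFact bar κ L1 L2 π γ α β }

/-!
Call a canonical factorization `γ α β` of `π` long when `|γ| ≥ 2N + M`, where `N` is a common
pumping length of `H_κ(L₁, L₂)` and `L₁` and `M` bounds the lengths of the words of the finite
language `L₂`. Pumping down a long canonical factorization inside its first `N` letters gives a
shorter word of `H_κ(L₁, L₂)` whose canonical factorization is again long: an `L₁`-prefix of the
shorter word pumps back up to an `L₁`-prefix of the original word, whose length canonicity bounds
by `|π| - |γ|`, and an `L₂`-suffix is short. Hence `|γ|` is bounded along canonical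
factorizations and `MGP(L₁, L₂)` is finite. The case of finite `L₁` reduces to that of finite
`L₂` by `w ↦ w̄`, which exchanges the roles of `L₁` and `L₂`.
-/

section Ovr

variable {σ : Type} {bar : σ → σ}

@[simp] lemma ovr_append (u v : List σ) : ovr bar (u ++ v) = ovr bar v ++ ovr bar u := by
  simp [ovr]

@[simp] lemma length_ovr (u : List σ) : (ovr bar u).length = u.length := by simp [ovr]

@[simp] lemma ovr_ovr (hbar : Function.Involutive bar) (w : List σ) : ovr bar (ovr bar w) = w := by
  simp [ovr, List.map_reverse, hbar.comp_self]

lemma List.IsPrefix.ovr (bar : σ → σ) {u w : List σ} (h : u <+: w) :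
    _root_.ovr bar u <:+ _root_.ovr bar w := by
  obtain ⟨t, rfl⟩ := h
  exact ⟨_root_.ovr bar t, (ovr_append u t).symm⟩

lemma List.IsSuffix.ovr (bar : σ → σ) {u w : List σ} (h : u <:+ w) :
    _root_.ovr bar u <+: _root_.ovr bar w := by
  obtain ⟨t, rfl⟩ := h
  exact ⟨_root_.ovr bar t, (ovr_append t u).symm⟩

end Ovr

section Factorization

variable {σ : Type} {bar : σ → σ}

lemma List.IsPrefix.exists_eq_append_of_length_le {a b u : List σ} (hu : u <+: a ++ b)
    (h : a.length ≤ u.length) : ∃ p, u = a ++ p ∧ p <+: b := by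
  obtain ⟨p, rfl⟩ := List.prefix_of_prefix_length_le (List.prefix_append a b) hu h
  exact ⟨p, rfl, (List.prefix_append_right_inj a).mp hu⟩

lemma List.IsSuffix.exists_eq_append_of_length_le {a b v : List σ} (hv : v <:+ a ++ b)
    (h : b.length ≤ v.length) : ∃ r, v = r ++ b ∧ r <:+ a := by
  obtain ⟨r, rfl⟩ := List.suffix_of_suffix_length_le (List.suffix_append a b) hv h
  exact ⟨r, rfl, List.suffix_append_self_iff.mp hv⟩

lemma exists_append_ovr_eq_of_le_length {κ : ℕ} {α : List σ} (β : List σ)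
    (h : κ ≤ α.length) :
    ∃ α' β', α'.length = κ ∧ α ++ β ++ ovr bar α = α' ++ β' ++ ovr bar α' :=
  ⟨α.take κ, α.drop κ ++ β ++ ovr bar (α.drop κ), by simpa using h, by
    rw [show α ++ β ++ ovr bar α =
        (α.take κ ++ α.drop κ) ++ β ++ ovr bar (α.take κ ++ α.drop κ) by rw [List.take_append_drop]]
    simp only [ovr_append, List.append_assoc]⟩

lemma exists_eq_append_of_prefix_of_length_lt {γ w u : List σ}
    (hu : u <+: γ ++ w ++ ovr bar γ) (hlt : (γ ++ w).length < u.length) :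
    ∃ γ' s, s ≠ [] ∧ γ = γ' ++ s ∧ u = γ' ++ s ++ w ++ ovr bar s := by
  obtain ⟨p, rfl, hp⟩ := hu.exists_eq_append_of_length_le hlt.le
  have hpγ : p.length ≤ γ.length := by simpa using hp.length_le
  obtain ⟨γ', s, rfl, hs⟩ : ∃ γ' s, γ = γ' ++ s ∧ s.length = p.length :=
    ⟨γ.take (γ.length - p.length), γ.drop (γ.length - p.length), by simp,
      by simp only [List.length_drop]; omega⟩
  have hps : p = ovr bar s := by
    rw [ovr_append] at hp
    exact (List.prefix_of_prefix_length_le hp (List.prefix_append _ _) (by simp [hs])).eq_of_length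
      (by simp [hs])
  refine ⟨γ', s, ?_, rfl, by simp [hps]⟩
  rintro rfl
  simp only [List.length_nil, List.length_append] at hs hlt
  omega

lemma exists_eq_append_of_suffix_of_length_lt {γ w v : List σ}
    (hv : v <:+ γ ++ w ++ ovr bar γ) (hlt : (w ++ ovr bar γ).length < v.length) :
    ∃ γ' s, s ≠ [] ∧ γ = γ' ++ s ∧ v = s ++ w ++ ovr bar s ++ ovr bar γ' := by
  rw [List.append_assoc] at hv
  obtain ⟨s, rfl, γ', rfl⟩ := hv.exists_eq_append_of_length_le hlt.le
  refine ⟨γ', s, ?_, rfl, by simp⟩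
  rintro rfl
  simp only [List.length_append, List.length_nil] at hlt
  omega

variable {κ : ℕ} {L1 L2 : Language σ}

theorem exists_canonFact {π : List σ} (hπ : π ∈ hairpinCompletion bar κ L1 L2) :
    ∃ γ α β, CanonFact bar κ L1 L2 π γ α β := by
  set S := {γ | ∃ α β, π = γ ++ α ++ β ++ ovr bar α ++ ovr bar γ ∧ κ ≤ α.length ∧
    (γ ++ α ++ β ++ ovr bar α ∈ L1 ∨ α ++ β ++ ovr bar α ++ ovr bar γ ∈ L2)}
  obtain ⟨γ, ⟨α, β, hπ, hα, hmem⟩, hmin⟩ := (measure List.length).wf.has_min S hπ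
  have hshort : ∀ γ' s, s ≠ [] → γ = γ' ++ s → γ' ∉ S := by
    rintro γ' s hs rfl hγ'
    exact hmin γ' hγ' (show γ'.length < (γ' ++ s).length by simp [List.length_pos_iff.mpr hs])
  obtain ⟨α', β', hα', hstem⟩ := exists_append_ovr_eq_of_le_length (bar := bar) β hα
  have hπ' : π = γ ++ (α ++ β ++ ovr bar α) ++ ovr bar γ := by simp [hπ]
  have hL1 : γ ++ α' ++ β' ++ ovr bar α' = γ ++ (α ++ β ++ ovr bar α) := by
    rw [hstem]; simp only [List.append_assoc]
  have hL2 : α' ++ β' ++ ovr bar α' ++ ovr bar γ = α ++ β ++ ovr bar α ++ ovr bar γ := by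
    rw [hstem]
  refine ⟨γ, α', β', by rw [hπ', ← hL1], hα', ?_, ?_, ?_⟩
  · rw [hL1, hL2]
    simpa only [List.append_assoc] using hmem
  · intro u hu huL1
    rw [hL1]
    by_contra hnot
    have hlt : (γ ++ (α ++ β ++ ovr bar α)).length < u.length := by
      by_contra! hle
      exact hnot (List.prefix_of_prefix_length_le hu (hπ' ▸ List.prefix_append _ _) hle)
    obtain ⟨γ', s, hs, rfl, rfl⟩ := exists_eq_append_of_prefix_of_length_lt (hπ' ▸ hu) hlt
    exact hshort γ' s hs rfl ⟨s ++ α, β, by simp [hπ], by simp only [List.length_append]; omega,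
      Or.inl (by simpa using huL1)⟩
  · intro v hv hvL2
    rw [hL2]
    by_contra hnot
    have hlt : (α ++ β ++ ovr bar α ++ ovr bar γ).length < v.length := by
      by_contra! hle
      exact hnot (List.suffix_of_suffix_length_le hv (by rw [hπ]; simp) hle)
    obtain ⟨γ', s, hs, rfl, rfl⟩ := exists_eq_append_of_suffix_of_length_lt (hπ' ▸ hv) hlt
    exact hshort γ' s hs rfl ⟨s ++ α, β, by simp [hπ], by simp only [List.length_append]; omega,
      Or.inr (by simpa using hvL2)⟩

end Factorization

section Pumping

variable {σ : Type}

lemma DFA.evalFrom_inter {q q' : Type} (M : DFA σ q) (M' : DFA σ q') (s : q) (s' : q')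
    (x : List σ) : (M.inter M').evalFrom (s, s') x = (M.evalFrom s x, M'.evalFrom s' x) := by
  induction x generalizing s s' with
  | nil => rfl
  | cons a x ih => exact ih _ _

theorem Language.IsRegular.exists_pump_pair {L L' : Language σ} (h : L.IsRegular)
    (h' : L'.IsRegular) : ∃ N, ∀ w : List σ, N ≤ w.length → ∃ x y z,
      w = x ++ y ++ z ∧ x.length + y.length ≤ N ∧ y ≠ [] ∧
        L.leftQuotient (x ++ y) = L.leftQuotient x ∧
        L'.leftQuotient (x ++ y) = L'.leftQuotient x := by
  obtain ⟨q, _, M, rfl⟩ := h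
  obtain ⟨q', _, M', rfl⟩ := h'
  refine ⟨Fintype.card (q × q'), fun w hw => ?_⟩
  obtain ⟨_, x, y, z, rfl, hlen, hy, hx, hloop, -⟩ := (M.inter M').evalFrom_split hw rfl
  have hxy : (M.eval (x ++ y), M'.eval (x ++ y)) = (M.eval x, M'.eval x) := by
    simp only [DFA.eval, ← DFA.evalFrom_inter]
    rw [DFA.evalFrom_of_append, ← DFA.inter_start, hx, hloop]
  simp only [Prod.mk.injEq] at hxy
  exact ⟨x, y, z, rfl, hlen, hy, by simp only [leftQuotient_accepts_apply, hxy],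
    by simp only [leftQuotient_accepts_apply, hxy]⟩

end Pumping

section Descent

variable {σ : Type} {bar : σ → σ} {κ : ℕ} {L1 L2 : Language σ} {π γ α β : List σ}

lemma CanonFact.two_mul_length_le (h : CanonFact bar κ L1 L2 π γ α β) :
    2 * γ.length ≤ π.length := by
  rw [h.1]
  simp only [List.length_append, length_ovr]
  omega

lemma CanonFact.length_add_le_of_prefix (h : CanonFact bar κ L1 L2 π γ α β) {u : List σ}
    (hu : u <+: π) (huL1 : u ∈ L1) : u.length + γ.length ≤ π.length := by
  have := (h.2.2.2.1 u hu huL1).length_le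
  rw [h.1]
  simp only [List.length_append, length_ovr] at this ⊢
  omega

lemma CanonFact.exists_prefix_or_exists_suffix (h : CanonFact bar κ L1 L2 π γ α β) :
    (∃ u, u <+: π ∧ u ∈ L1 ∧ u.length + γ.length = π.length) ∨
      ∃ v ∈ L2, v.length + γ.length = π.length := by
  obtain ⟨hπ, -, hmem, -⟩ := h
  rcases hmem with hu | hv
  · exact Or.inl ⟨_, ⟨ovr bar γ, hπ.symm⟩, hu, by simp only [hπ, List.length_append, length_ovr]⟩
  · exact Or.inr ⟨_, hv, by simp only [hπ, List.length_append, length_ovr]; omega⟩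

lemma CanonFact.mem_hairpinCompletion (h : CanonFact bar κ L1 L2 π γ α β) :
    π ∈ hairpinCompletion bar κ L1 L2 :=
  ⟨γ, α, β, h.1, h.2.1.ge, h.2.2.1⟩

theorem exists_canonFact_shorter (h1 : L1.IsRegular) (hfin : (L2 : Set (List σ)).Finite)
    (hH : (hairpinCompletion bar κ L1 L2).IsRegular) :
    ∃ G, ∀ π γ α β, CanonFact bar κ L1 L2 π γ α β → G ≤ γ.length →
      ∃ π' γ' α' β', CanonFact bar κ L1 L2 π' γ' α' β' ∧ G ≤ γ'.length ∧
        π'.length < π.length := by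
  obtain ⟨N, hN⟩ := hH.exists_pump_pair h1
  obtain ⟨M, hM⟩ := (hfin.image List.length).bddAbove
  refine ⟨2 * N + M, fun π γ α β hcf hγ => ?_⟩
  obtain ⟨x, y, z, rfl, hxy, hy, hqH, hq1⟩ := hN π (by have := hcf.two_mul_length_le; omega)
  have hy : 0 < y.length := List.length_pos_iff.mpr hy
  have hxz : x ++ z ∈ hairpinCompletion bar κ L1 L2 := by
    have : z ∈ (hairpinCompletion bar κ L1 L2).leftQuotient (x ++ y) := by
      simpa [Language.mem_leftQuotient] using hcf.mem_hairpinCompletion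
    rwa [hqH] at this
  obtain ⟨γ₀, α₀, β₀, hcf₀⟩ := exists_canonFact hxz
  refine ⟨x ++ z, γ₀, α₀, β₀, hcf₀, ?_, by simp only [List.length_append]; omega⟩
  have hlen := hcf.two_mul_length_le
  simp only [List.length_append] at hlen ⊢
  rcases hcf₀.exists_prefix_or_exists_suffix with ⟨u, hu, huL1, hu_len⟩ | ⟨v, hvL2, hv_len⟩
  · rcases le_or_gt x.length u.length with hx | hx
    · obtain ⟨s, rfl, hs⟩ := hu.exists_eq_append_of_length_le hx
      have hxys : x ++ y ++ s ∈ L1 := by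
        have : s ∈ L1.leftQuotient x := huL1
        rwa [← hq1] at this
      have := hcf.length_add_le_of_prefix (by simpa using hs) hxys
      simp only [List.length_append] at this hu_len
      omega
    · simp only [List.length_append] at hu_len
      omega
  · have := hM ⟨v, hvL2, rfl⟩
    simp only [List.length_append] at hv_len
    omega

theorem exists_forall_canonFact_length_lt (h1 : L1.IsRegular) (hfin : (L2 : Set (List σ)).Finite)
    (hH : (hairpinCompletion bar κ L1 L2).IsRegular) :
    ∃ G, ∀ π γ α β, CanonFact bar κ L1 L2 π γ α β → γ.length < G := by
  obtain ⟨G, hG⟩ := exists_canonFact_shorter h1 hfin hH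
  refine ⟨G, fun π γ α β hcf => ?_⟩
  by_contra! hγ
  obtain ⟨π₀, ⟨γ₀, α₀, β₀, hcf₀, hγ₀⟩, hmin⟩ := (measure List.length).wf.has_min
    {π | ∃ γ α β, CanonFact bar κ L1 L2 π γ α β ∧ G ≤ γ.length} ⟨π, γ, α, β, hcf, hγ⟩
  obtain ⟨π', γ', α', β', hcf', hγ', hlt⟩ := hG π₀ γ₀ α₀ β₀ hcf₀ hγ₀
  exact hmin π' ⟨γ', α', β', hcf', hγ'⟩ hlt

theorem MGP_finite [Finite σ] (h1 : L1.IsRegular) (hfin : (L2 : Set (List σ)).Finite)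
    (hH : (hairpinCompletion bar κ L1 L2).IsRegular) : (MGP bar κ L1 L2 : Set (List σ)).Finite := by
  obtain ⟨G, hG⟩ := exists_forall_canonFact_length_lt h1 hfin hH
  refine (List.finite_length_lt σ (G + κ)).subset ?_
  rintro _ ⟨π, γ, α, β, -, hcf, rfl⟩
  have := hG π γ α β hcf
  simp only [Set.mem_ofPred_eq, List.length_append, hcf.2.1]
  omega

end Descent

section Symmetry

variable {σ : Type} {bar : σ → σ} {κ : ℕ} {L1 L2 : Language σ}

/-- For involutive `bar`, this is also the image of `L` under `ovr bar`. -/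
def ovrLang (bar : σ → σ) (L : Language σ) : Language σ := {w | ovr bar w ∈ L}

lemma mem_ovrLang {L : Language σ} {w : List σ} : w ∈ ovrLang bar L ↔ ovr bar w ∈ L := Iff.rfl

lemma ovrLang_ovrLang (hbar : Function.Involutive bar) (L : Language σ) :
    ovrLang bar (ovrLang bar L) = L := by
  ext w
  rw [mem_ovrLang, mem_ovrLang, ovr_ovr hbar]

lemma Language.IsRegular.ovrLang {L : Language σ} (h : L.IsRegular) :
    (_root_.ovrLang bar L).IsRegular := by
  obtain ⟨q, _, M, hM⟩ := h.reverse
  exact ⟨q, inferInstance, M.comap bar, by rw [DFA.accepts_comap, hM]; rfl⟩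

lemma Set.Finite.ovrLang (hbar : Function.Involutive bar) {L : Language σ}
    (h : (L : Set (List σ)).Finite) : (_root_.ovrLang bar L : Set (List σ)).Finite :=
  h.preimage (Function.LeftInverse.injective (ovr_ovr hbar)).injOn

lemma mem_ovrLang_or_mem_ovrLang (hbar : Function.Involutive bar) {γ α β : List σ}
    (h : γ ++ α ++ β ++ ovr bar α ∈ L1 ∨ α ++ β ++ ovr bar α ++ ovr bar γ ∈ L2) :
    γ ++ α ++ ovr bar β ++ ovr bar α ∈ ovrLang bar L2 ∨
      α ++ ovr bar β ++ ovr bar α ++ ovr bar γ ∈ ovrLang bar L1 := by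
  simpa [mem_ovrLang, ovr_ovr hbar, or_comm] using h

lemma ovr_mem_hairpinCompletion (hbar : Function.Involutive bar) {π : List σ}
    (h : π ∈ hairpinCompletion bar κ L1 L2) :
    ovr bar π ∈ hairpinCompletion bar κ (ovrLang bar L2) (ovrLang bar L1) := by
  obtain ⟨γ, α, β, rfl, hα, hmem⟩ := h
  exact ⟨γ, α, ovr bar β, by simp [ovr_ovr hbar], hα,
    mem_ovrLang_or_mem_ovrLang hbar hmem⟩

lemma hairpinCompletion_ovrLang (hbar : Function.Involutive bar) :
    hairpinCompletion bar κ (ovrLang bar L2) (ovrLang bar L1) =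
      ovrLang bar (hairpinCompletion bar κ L1 L2) := by
  ext π
  rw [mem_ovrLang]
  refine ⟨fun h => ?_, fun h => ?_⟩
  · simpa only [ovrLang_ovrLang hbar] using ovr_mem_hairpinCompletion hbar h
  · simpa only [ovr_ovr hbar] using ovr_mem_hairpinCompletion hbar h

lemma CanonFact.ovr (hbar : Function.Involutive bar) {π γ α β : List σ}
    (h : CanonFact bar κ L1 L2 π γ α β) :
    CanonFact bar κ (ovrLang bar L2) (ovrLang bar L1) (_root_.ovr bar π) γ α
      (_root_.ovr bar β) := by
  obtain ⟨rfl, hα, hmem, hpre, hsuf⟩ := h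
  refine ⟨by simp [ovr_ovr hbar], hα, mem_ovrLang_or_mem_ovrLang hbar hmem,
    fun u hu huL2 => ?_, fun v hv hvL1 => ?_⟩
  · have := (hsuf _ (by simpa [ovr_ovr hbar] using hu.ovr bar) huL2).ovr bar
    simpa [ovr_ovr hbar] using this
  · have := (hpre _ (by simpa [ovr_ovr hbar] using hv.ovr bar) hvL1).ovr bar
    simpa [ovr_ovr hbar] using this

lemma MGP_subset_MGP_ovrLang (hbar : Function.Involutive bar) :
    MGP bar κ L1 L2 ≤ MGP bar κ (ovrLang bar L2) (ovrLang bar L1) := by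
  rintro _ ⟨π, γ, α, β, hπ, hcf, rfl⟩
  exact ⟨_, γ, α, _, ovr_mem_hairpinCompletion hbar hπ, hcf.ovr hbar, rfl⟩

end Symmetry

theorem mgp_infinite_imp_hairpin_not_regular_general
    {σ : Type} [Fintype σ]
    (bar : σ → σ) (hbar : ∀ a, bar (bar a) = a)
    (κ : ℕ)
    (L1 L2 : Language σ) (h1 : L1.IsRegular) (h2 : L2.IsRegular)
    (hinf : (MGP bar κ L1 L2 : Set (List σ)).Infinite)
    (hfin : (L1 : Set (List σ)).Finite ∨ (L2 : Set (List σ)).Finite) :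
    ¬ (hairpinCompletion bar κ L1 L2).IsRegular := by
  intro hH
  rcases hfin with hfin1 | hfin2
  · have hH' : (hairpinCompletion bar κ (ovrLang bar L2) (ovrLang bar L1)).IsRegular := by
      rw [hairpinCompletion_ovrLang hbar]
      exact hH.ovrLang
    exact hinf ((MGP_finite h2.ovrLang (hfin1.ovrLang hbar) hH').subset
      (MGP_subset_MGP_ovrLang hbar))
  · exact hinf (MGP_finite h1 hfin2 hH)

theorem mgp_infinite_imp_hairpin_not_regular
    {σ : Type} [Fintype σ] (hσ : 2 ≤ Fintype.card σ)
    (bar : σ → σ) (hbar : ∀ a, bar (bar a) = a)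
    (κ : ℕ) (hκ : 1 ≤ κ)
    (L1 L2 : Language σ) (h1 : L1.IsRegular) (h2 : L2.IsRegular)
    (hinf : (MGP bar κ L1 L2 : Set (List σ)).Infinite)
    (hfin : (L1 : Set (List σ)).Finite ∨ (L2 : Set (List σ)).Finite) :
    ¬ (hairpinCompletion bar κ L1 L2).IsRegular :=
  mgp_infinite_imp_hairpin_not_regular_general bar hbar κ L1 L2 h1 h2 hinf hfin
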